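/- The weighted affine estimator p̂_n = (Σ_{i=1}^n ω_i r̂_i)/(Σ_{i=1}^n ω_i), with λ̂_i = λ_i > 0 and positive weights ω_i, has variance Var[p̂_n] = (Σ ω_i)^{-2} Σ_{i=1}^n (ω_i²/λ_i²) ( p(1-p) - (1-λ_i)² Var[p̄_{i-1}] ). -/

import Mathlib

/-! Write `r̂ₙ = (rₙ - (1 - λₙ) p̄ₙ₋₁) / λₙ`. Since `E[rₙ | r₁, …, rₙ₋₁] = λₙ p + (1 - λₙ) p̄ₙ₋₁`,
every `Y` measurable with respect to the first `n - 1` ratings satisfies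
`Cov[rₙ, Y] = (1 - λₙ) Cov[p̄ₙ₋₁, Y]`, hence `Cov[r̂ₙ, Y] = 0`. So the `r̂ᵢ` are pairwise
uncorrelated and `Var[p̂ₙ] = (∑ ωᵢ)⁻² ∑ ωᵢ² Var[r̂ᵢ]`. Taking `Y = p̄ₙ₋₁` and using
`Var[rₙ] = p(1 - p)` (`rₙ` is Bernoulli, with mean `p` by strong induction) gives `Var[r̂ᵢ]`. -/

open MeasureTheory ProbabilityTheory Finset Filter

/-- Sample mean of the first `n` ratings (ratings are indexed from 1). -/
noncomputable def pbar {Ω : Type*} (r : ℕ → Ω → ℝ) (n : ℕ) (ω : Ω) : ℝ :=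
  (∑ i ∈ Finset.Icc 1 n, r i ω) / n

/-- σ-algebra generated by the first `n` ratings. -/
def ratingsAlg {Ω : Type*} (r : ℕ → Ω → ℝ) (n : ℕ) : MeasurableSpace Ω :=
  ⨆ i ∈ Finset.Icc 1 n, MeasurableSpace.comap (r i) (inferInstance : MeasurableSpace ℝ)

/-- The bandwagon rating process of Xie et al., as used in the paper. -/
structure Bandwagon {Ω : Type*} [MeasurableSpace Ω] (μ : Measure Ω)
    (p : ℝ) (lam : ℕ → ℝ) (r : ℕ → Ω → ℝ) : Prop where
  prob : IsProbabilityMeasure μ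
  hp : 0 < p ∧ p < 1
  hlam1 : lam 1 = 1
  hlam_nonneg : ∀ n, 1 ≤ n → 0 ≤ lam n
  hlam_mono : ∀ n, 2 ≤ n → lam n ≤ lam (n - 1)
  hmeas : ∀ n, Measurable (r n)
  hbin : ∀ n, 1 ≤ n → ∀ ω, r n ω = 0 ∨ r n ω = 1
  hfirst : ∫ ω, r 1 ω ∂μ = p
  hcond : ∀ n, 2 ≤ n →
    μ[r n | ratingsAlg r (n - 1)] =ᵐ[μ]
      fun ω => lam n * p + (1 - lam n) * pbar r (n - 1) ω

/-- Affine-corrected rating `r̂ᵢ`. -/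
noncomputable def rhat {Ω : Type*} (r : ℕ → Ω → ℝ) (lam : ℕ → ℝ) (i : ℕ) (ω : Ω) : ℝ :=
  (r i ω - (1 - lam i) * pbar r (i - 1) ω) / lam i

namespace ProbabilityTheory

variable {Ω : Type*} {mΩ : MeasurableSpace Ω} {μ : Measure Ω}

theorem covariance_eq_of_condExp_ae_eq [IsProbabilityMeasure μ] {m : MeasurableSpace Ω}
    (hm : m ≤ mΩ) {X Y Z : Ω → ℝ} (hX : MemLp X 2 μ) (hY : MemLp Y 2 μ) (hZ : MemLp Z 2 μ)
    (hYm : StronglyMeasurable[m] Y) (hXZ : μ[X | m] =ᵐ[μ] Z) :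
    cov[X, Y; μ] = cov[Z, Y; μ] := by
  have h_mean : μ[X] = μ[Z] := by
    rw [← integral_condExp hm]
    exact integral_congr_ae hXZ
  have h_mul : μ[X * Y] = μ[Z * Y] := by
    rw [← integral_condExp hm]
    refine integral_congr_ae ?_
    filter_upwards [condExp_mul_of_stronglyMeasurable_right hYm (hX.integrable_mul hY)
      (hX.integrable one_le_two), hXZ] with ω hpull hω
    rw [hpull, Pi.mul_apply, Pi.mul_apply, hω]
  rw [covariance_eq_sub hX hY, covariance_eq_sub hZ hY, h_mean, h_mul]

theorem variance_fun_sum_of_covariance_eq_zero [IsFiniteMeasure μ] {ι : Type*} {s : Finset ι}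
    {X : ι → Ω → ℝ} (hX : ∀ i ∈ s, MemLp (X i) 2 μ)
    (hcov : ∀ i ∈ s, ∀ j ∈ s, i ≠ j → cov[X i, X j; μ] = 0) :
    Var[fun ω ↦ ∑ i ∈ s, X i ω; μ] = ∑ i ∈ s, Var[X i; μ] := by
  rw [variance_fun_sum' hX]
  refine Finset.sum_congr rfl fun i hi ↦ ?_
  rw [Finset.sum_eq_single_of_mem i hi fun j hj hji ↦ hcov i hi j hj hji.symm,
    covariance_self (hX i hi).aemeasurable]

theorem variance_of_forall_eq_zero_or_one [IsProbabilityMeasure μ] {X : Ω → ℝ}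
    (hXm : AEStronglyMeasurable X μ) (hX : ∀ ω, X ω = 0 ∨ X ω = 1) :
    Var[X; μ] = μ[X] * (1 - μ[X]) := by
  have hsq : X ^ 2 = X := funext fun ω ↦ by rcases hX ω with h | h <;> simp [h]
  have hL2 : MemLp X 2 μ :=
    MemLp.of_bound hXm 1 (ae_of_all _ fun ω ↦ by rcases hX ω with h | h <;> simp [h])
  rw [variance_eq_sub hL2, hsq]
  ring

end ProbabilityTheory

section

variable {Ω : Type*} {lam : ℕ → ℝ} {r : ℕ → Ω → ℝ}

theorem pbar_zero : pbar r 0 = 0 := by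
  funext ω
  simp [pbar]

theorem measurable_r_ratingsAlg {n i : ℕ} (hi : i ∈ Icc 1 n) :
    Measurable[ratingsAlg r n] (r i) :=
  measurable_iff_comap_le.mpr <|
    le_iSup₂ (f := fun i (_ : i ∈ Icc 1 n) ↦ MeasurableSpace.comap (r i) inferInstance) i hi

theorem measurable_pbar_ratingsAlg {n k : ℕ} (hk : k ≤ n) :
    Measurable[ratingsAlg r n] (pbar r k) :=
  (Finset.measurable_sum _ fun _ hi ↦ measurable_r_ratingsAlg
    (Icc_subset_Icc_right hk hi)).div_const _

theorem measurable_rhat_ratingsAlg {n i : ℕ} (hi : i ∈ Icc 1 n) :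
    Measurable[ratingsAlg r n] (rhat r lam i) :=
  ((measurable_r_ratingsAlg hi).sub ((measurable_pbar_ratingsAlg
    ((Nat.sub_le i 1).trans (mem_Icc.1 hi).2)).const_mul _)).div_const _

variable [MeasurableSpace Ω] {μ : Measure Ω} {p : ℝ}

theorem measurable_pbar (hr : ∀ i, Measurable (r i)) (k : ℕ) : Measurable (pbar r k) :=
  (Finset.measurable_sum _ fun i _ ↦ hr i).div_const _

theorem ratingsAlg_le (hr : ∀ i, Measurable (r i)) (n : ℕ) :
    ratingsAlg r n ≤ ‹MeasurableSpace Ω› :=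
  iSup₂_le fun i _ ↦ (hr i).comap_le

theorem integral_pbar [IsProbabilityMeasure μ] {k : ℕ} (hk : k ≠ 0)
    (hr : ∀ i ∈ Icc 1 k, Integrable (r i) μ) (hmean : ∀ i ∈ Icc 1 k, μ[r i] = p) :
    μ[pbar r k] = p := by
  simp only [pbar]
  rw [integral_div, integral_finsetSum _ hr, Finset.sum_congr rfl hmean, sum_const,
    Nat.card_Icc, nsmul_eq_mul, Nat.add_sub_cancel]
  field_simp

namespace Bandwagon

theorem abs_r_le_one (hbw : Bandwagon μ p lam r) {i : ℕ} (hi : 1 ≤ i) (ω : Ω) :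
    |r i ω| ≤ 1 := by
  rcases hbw.hbin i hi ω with h | h <;> simp [h]

theorem abs_pbar_le_one (hbw : Bandwagon μ p lam r) (k : ℕ) (ω : Ω) : |pbar r k ω| ≤ 1 := by
  rcases Nat.eq_zero_or_pos k with rfl | hk
  · simp [pbar_zero]
  have hsum : |∑ i ∈ Icc 1 k, r i ω| ≤ k :=
    calc |∑ i ∈ Icc 1 k, r i ω| ≤ ∑ i ∈ Icc 1 k, |r i ω| := abs_sum_le_sum_abs _ _
      _ ≤ ∑ _i ∈ Icc 1 k, (1 : ℝ) :=
          sum_le_sum fun i hi ↦ hbw.abs_r_le_one (mem_Icc.1 hi).1 ω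
      _ = k := by simp
  rw [pbar, abs_div, Nat.abs_cast]
  exact div_le_one_of_le₀ hsum k.cast_nonneg

theorem memLp_r (hbw : Bandwagon μ p lam r) {i : ℕ} (hi : 1 ≤ i) : MemLp (r i) 2 μ :=
  have := hbw.prob
  .of_bound (hbw.hmeas i).aestronglyMeasurable 1 (ae_of_all _ (hbw.abs_r_le_one hi))

theorem memLp_pbar (hbw : Bandwagon μ p lam r) (k : ℕ) : MemLp (pbar r k) 2 μ :=
  have := hbw.prob
  .of_bound (measurable_pbar hbw.hmeas k).aestronglyMeasurable 1
    (ae_of_all _ (hbw.abs_pbar_le_one k))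

theorem memLp_rhat (hbw : Bandwagon μ p lam r) {i : ℕ} (hi : 1 ≤ i) :
    MemLp (rhat r lam i) 2 μ :=
  (((hbw.memLp_r hi).sub ((hbw.memLp_pbar _).const_mul _)).mul_const (lam i)⁻¹ :)

theorem integral_r_eq (hbw : Bandwagon μ p lam r) {n : ℕ} (hn : 2 ≤ n) :
    μ[r n] = lam n * p + (1 - lam n) * μ[pbar r (n - 1)] := by
  have := hbw.prob
  rw [← integral_condExp (ratingsAlg_le hbw.hmeas (n - 1)), integral_congr_ae (hbw.hcond n hn),
    integral_add (integrable_const _) ((hbw.memLp_pbar _).integrable one_le_two |>.const_mul _),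
    integral_const, integral_const_mul, probReal_univ, one_smul]

theorem integral_r (hbw : Bandwagon μ p lam r) {n : ℕ} (hn : 1 ≤ n) : μ[r n] = p := by
  have := hbw.prob
  induction n using Nat.strong_induction_on with
  | _ n ih =>
    obtain rfl | hn2 := hn.eq_or_lt
    · exact hbw.hfirst
    have hmean : μ[pbar r (n - 1)] = p :=
      integral_pbar (by omega) (fun i hi ↦ (hbw.memLp_r (mem_Icc.1 hi).1).integrable one_le_two)
        fun i hi ↦ ih i (by grind) (mem_Icc.1 hi).1
    rw [hbw.integral_r_eq hn2, hmean]
    ring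

theorem variance_r (hbw : Bandwagon μ p lam r) {n : ℕ} (hn : 1 ≤ n) :
    Var[r n; μ] = p * (1 - p) := by
  have := hbw.prob
  rw [variance_of_forall_eq_zero_or_one (hbw.hmeas n).aestronglyMeasurable (hbw.hbin n hn),
    hbw.integral_r hn]

theorem covariance_r (hbw : Bandwagon μ p lam r) {n : ℕ} (hn : 2 ≤ n) {Y : Ω → ℝ}
    (hY : MemLp Y 2 μ) (hYm : Measurable[ratingsAlg r (n - 1)] Y) :
    cov[r n, Y; μ] = (1 - lam n) * cov[pbar r (n - 1), Y; μ] := by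
  have := hbw.prob
  have hb := hbw.memLp_pbar (n - 1)
  have hZ : MemLp (fun ω ↦ lam n * p + (1 - lam n) * pbar r (n - 1) ω) 2 μ :=
    (memLp_const (lam n * p)).add (hb.const_mul (1 - lam n))
  rw [covariance_eq_of_condExp_ae_eq (ratingsAlg_le hbw.hmeas (n - 1)) (hbw.memLp_r (by omega))
    hY hZ hYm.stronglyMeasurable (hbw.hcond n hn),
    covariance_const_add_left ((hb.const_mul _).integrable one_le_two),
    covariance_const_mul_left]

theorem covariance_r_pbar (hbw : Bandwagon μ p lam r) {n : ℕ} (hn : 1 ≤ n) :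
    cov[r n, pbar r (n - 1); μ] = (1 - lam n) * Var[pbar r (n - 1); μ] := by
  obtain rfl | hn2 := hn.eq_or_lt
  · simp [pbar_zero]
  rw [hbw.covariance_r hn2 (hbw.memLp_pbar _) (measurable_pbar_ratingsAlg le_rfl),
    covariance_self (measurable_pbar hbw.hmeas _).aemeasurable]

theorem variance_rhat (hbw : Bandwagon μ p lam r) {n : ℕ} (hn : 1 ≤ n) :
    Var[rhat r lam n; μ]
      = (p * (1 - p) - (1 - lam n) ^ 2 * Var[pbar r (n - 1); μ]) / lam n ^ 2 := by
  have := hbw.prob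
  have hrhat : rhat r lam n
      = fun ω ↦ (r n ω - (1 - lam n) * pbar r (n - 1) ω) * (lam n)⁻¹ := rfl
  rw [hrhat, variance_mul_const,
    variance_fun_sub (hbw.memLp_r hn) ((hbw.memLp_pbar _).const_mul _), variance_const_mul,
    covariance_const_mul_right, hbw.covariance_r_pbar hn, hbw.variance_r hn]
  ring

theorem covariance_rhat_eq_zero (hbw : Bandwagon μ p lam r) {n : ℕ} (hn : 2 ≤ n) {Y : Ω → ℝ}
    (hY : MemLp Y 2 μ) (hYm : Measurable[ratingsAlg r (n - 1)] Y) :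
    cov[rhat r lam n, Y; μ] = 0 := by
  have := hbw.prob
  have hrhat : rhat r lam n = fun ω ↦ (r n ω - (1 - lam n) * pbar r (n - 1) ω) / lam n := rfl
  rw [hrhat, covariance_fun_div_left, covariance_fun_sub_left (hbw.memLp_r (by omega))
    ((hbw.memLp_pbar _).const_mul _) hY, covariance_const_mul_left, hbw.covariance_r hn hY hYm,
    sub_self, zero_div]

theorem covariance_rhat_rhat_eq_zero (hbw : Bandwagon μ p lam r) {i j : ℕ} (hi : 1 ≤ i)
    (hj : 1 ≤ j) (hij : i ≠ j) : cov[rhat r lam i, rhat r lam j; μ] = 0 := by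
  wlog hlt : i < j generalizing i j
  · rw [covariance_comm]
    exact this hj hi hij.symm (by omega)
  rw [covariance_comm]
  exact hbw.covariance_rhat_eq_zero (by omega) (hbw.memLp_rhat hi)
    (measurable_rhat_ratingsAlg (mem_Icc.2 ⟨hi, by omega⟩))

end Bandwagon

end

theorem affine_estimator_variance_general {Ω : Type*} [MeasurableSpace Ω] (μ : MeasureTheory.Measure Ω)
    (p : ℝ) (lam : ℕ → ℝ) (r : ℕ → Ω → ℝ)
    (hbw : Bandwagon μ p lam r) (w : ℕ → ℝ) :
    ∀ n, 1 ≤ n →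
      variance (fun ω =>
          (∑ i ∈ Finset.Icc 1 n, w i * rhat r lam i ω) / ∑ i ∈ Finset.Icc 1 n, w i) μ
        = (1 / (∑ i ∈ Finset.Icc 1 n, w i) ^ 2) *
            ∑ i ∈ Finset.Icc 1 n, (w i ^ 2 / lam i ^ 2) *
              (p * (1 - p) - (1 - lam i) ^ 2 * variance (pbar r (i - 1)) μ) := by
  intro n _
  have := hbw.prob
  have hmem : ∀ i ∈ Icc 1 n, 1 ≤ i := fun i hi ↦ (mem_Icc.1 hi).1
  have hsum : Var[fun ω ↦ ∑ i ∈ Icc 1 n, w i * rhat r lam i ω; μ]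
      = ∑ i ∈ Icc 1 n, w i ^ 2 * Var[rhat r lam i; μ] := by
    rw [variance_fun_sum_of_covariance_eq_zero
      (fun i hi ↦ (hbw.memLp_rhat (hmem i hi)).const_mul (w i))
      fun i hi j hj hij ↦ by
        rw [covariance_const_mul_left, covariance_const_mul_right,
          hbw.covariance_rhat_rhat_eq_zero (hmem i hi) (hmem j hj) hij, mul_zero, mul_zero]]
    simp only [variance_const_mul]
  simp_rw [div_eq_mul_inv _ (∑ i ∈ Icc 1 n, w i)]
  rw [variance_mul_const, hsum, mul_comm, inv_pow, one_div]
  congr 1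
  refine sum_congr rfl fun i hi ↦ ?_
  rw [hbw.variance_rhat (hmem i hi)]
  ring

theorem affine_estimator_variance {Ω : Type*} [MeasurableSpace Ω] (μ : MeasureTheory.Measure Ω)
    (p : ℝ) (lam : ℕ → ℝ) (r : ℕ → Ω → ℝ)
    (hbw : Bandwagon μ p lam r)
    (hpos : ∀ i, 1 ≤ i → 0 < lam i) (w : ℕ → ℝ) (hw : ∀ i, 1 ≤ i → 0 < w i) :
    ∀ n, 1 ≤ n →
      variance (fun ω =>
          (∑ i ∈ Finset.Icc 1 n, w i * rhat r lam i ω) / ∑ i ∈ Finset.Icc 1 n, w i) μ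
        = (1 / (∑ i ∈ Finset.Icc 1 n, w i) ^ 2) *
            ∑ i ∈ Finset.Icc 1 n, (w i ^ 2 / lam i ^ 2) *
              (p * (1 - p) - (1 - lam i) ^ 2 * variance (pbar r (i - 1)) μ) :=
  affine_estimator_variance_general μ p lam r hbw w
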